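/- arXiv:0812.5025 — 2 statements merged into one kernel-verified Lean document; each statement's English description precedes it below -/
import Mathlib

section
/- Let X be a real normed space, Y a real Banach space, θ ≥ 0 and p < 1. Suppose f : X → Y satisfies ‖D_f(x,y)‖ ≤ θ(‖x‖^p + ‖y‖^p) for all x, y in X and f(0) = 0. Then there exist a unique quartic function Q : X → Y and a unique additive function A : X → Y such that ‖f(x) - Q(x) - A(x)‖ ≤ (θ/48) ‖x‖^p (16/(16 - 2^p) + 96/(1 - 2^{p-1})) for all x in X. -/
/-!
Split `f` into its even and odd parts `fₑ`, `fₒ`. Putting `x = 0` in `D` gives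
`D_{fₑ}(0, y) = 3 (fₑ(2y) - 16 fₑ(y))` and `D_{fₒ}(0, y) = 3 (fₒ(2y) - 2 fₒ(y))`, so Hyers' direct
method produces `Q = lim 16⁻ⁿ fₑ(2ⁿ x)` and `A = lim 2⁻ⁿ fₒ(2ⁿ x)`; since `2ᵖ < 2`, the control
`θ (‖x‖ᵖ + ‖y‖ᵖ)` is killed in the limit and `D_Q = D_A = 0`. Together with `Q(2x) = 16 Q(x)`
this is the quartic equation, and with `A(2x) = 2 A(x)` it forces additivity. The resulting
constant `(2θ/3) (1/(16 - 2ᵖ) + 1/(2 - 2ᵖ))` is below the stated one. Uniqueness: the even part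
of `f - Q' - A'` is `fₑ - Q'`, and a function with `h(2x) = λ h(x)` and `‖h(x)‖ = O(‖x‖ᵖ)`
vanishes when `2ᵖ < λ`.
-/

open Filter Topology

/-- The quartic functional equation:
`Q(2x+y) + Q(2x-y) = 4(Q(x+y) + Q(x-y)) + 24 Q(x) - 6 Q(y)`. -/
def IsQuartic {X Y : Type*} [AddCommGroup X] [Module ℝ X] [AddCommGroup Y] [Module ℝ Y]
    (f : X → Y) : Prop :=
  ∀ x y : X,
    f ((2 : ℝ) • x + y) + f ((2 : ℝ) • x - y) =
      (4 : ℝ) • (f (x + y) + f (x - y)) + (24 : ℝ) • f x - (6 : ℝ) • f y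

/-- The difference operator
`D_f(x,y) = 7[f(2x+y) + f(2x-y)] - 28[f(x+y) + f(x-y)] + 3[f(2y) - 2f(y)] - 14[f(2x) - 4f(x)]`. -/
def Dmap {X Y : Type*} [AddCommGroup X] [Module ℝ X] [AddCommGroup Y] [Module ℝ Y]
    (f : X → Y) (x y : X) : Y :=
  (7 : ℝ) • (f ((2 : ℝ) • x + y) + f ((2 : ℝ) • x - y))
    - (28 : ℝ) • (f (x + y) + f (x - y))
    + (3 : ℝ) • (f ((2 : ℝ) • y) - (2 : ℝ) • f y)
    - (14 : ℝ) • (f ((2 : ℝ) • x) - (4 : ℝ) • f x)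

section EvenOddParts

variable {α E : Type*} [AddCommGroup α] [AddCommGroup E] [Module ℝ E]

noncomputable def evenPart (f : α → E) (x : α) : E := (2 : ℝ)⁻¹ • (f x + f (-x))

noncomputable def oddPart (f : α → E) (x : α) : E := (2 : ℝ)⁻¹ • (f x - f (-x))

theorem evenPart_add_oddPart (f : α → E) (x : α) : evenPart f x + oddPart f x = f x := by
  simp only [evenPart, oddPart]; module

theorem evenPart_even (f : α → E) : (evenPart f).Even := by
  intro x; simp only [evenPart, neg_neg]; module

theorem oddPart_odd (f : α → E) : (oddPart f).Odd := by
  intro x; simp only [oddPart, neg_neg]; module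

theorem evenPart_sub_sub {f Q A : α → E} (hQ : Q.Even) (hA : A.Odd) (x : α) :
    evenPart (fun z => f z - Q z - A z) x = evenPart f x - Q x := by
  simp only [evenPart, hQ x, hA x]; module

theorem oddPart_sub_sub {f Q A : α → E} (hQ : Q.Even) (hA : A.Odd) (x : α) :
    oddPart (fun z => f z - Q z - A z) x = oddPart f x - A x := by
  simp only [oddPart, hQ x, hA x]; module

end EvenOddParts

section EvenOddPartsNorm

variable {α E : Type*} [AddCommGroup α] [NormedAddCommGroup E] [NormedSpace ℝ E]
  {f : α → E} {φ : α → ℝ}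

theorem norm_evenPart_le (h : ∀ x, ‖f x‖ ≤ φ x) (hφ : φ.Even) (x : α) :
    ‖evenPart f x‖ ≤ φ x := by
  calc ‖evenPart f x‖ ≤ 2⁻¹ * (‖f x‖ + ‖f (-x)‖) := by
        rw [evenPart, norm_smul, Real.norm_of_nonneg (by norm_num)]
        gcongr; exact norm_add_le _ _
    _ ≤ φ x := by linarith [h x, h (-x), hφ x]

theorem norm_oddPart_le (h : ∀ x, ‖f x‖ ≤ φ x) (hφ : φ.Even) (x : α) :
    ‖oddPart f x‖ ≤ φ x := by
  calc ‖oddPart f x‖ ≤ 2⁻¹ * (‖f x‖ + ‖f (-x)‖) := by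
        rw [oddPart, norm_smul, Real.norm_of_nonneg (by norm_num)]
        gcongr; exact norm_sub_le _ _
    _ ≤ φ x := by linarith [h x, h (-x), hφ x]

end EvenOddPartsNorm

section FunctionalEquations

variable {X Y : Type*} [AddCommGroup X] [Module ℝ X] [AddCommGroup Y] [Module ℝ Y]

theorem Dmap_evenPart (f : X → Y) (x y : X) :
    Dmap (evenPart f) x y = evenPart (fun v : X × X => Dmap f v.1 v.2) (x, y) := by
  simp only [Dmap, evenPart, Prod.fst_neg, Prod.snd_neg]
  rw [show (2 : ℝ) • -x + -y = -((2 : ℝ) • x + y) by module,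
    show (2 : ℝ) • -x - -y = -((2 : ℝ) • x - y) by module,
    show -x + -y = -(x + y) by module, show -x - -y = -(x - y) by module,
    smul_neg, smul_neg]
  module

theorem Dmap_oddPart (f : X → Y) (x y : X) :
    Dmap (oddPart f) x y = oddPart (fun v : X × X => Dmap f v.1 v.2) (x, y) := by
  simp only [Dmap, oddPart, Prod.fst_neg, Prod.snd_neg]
  rw [show (2 : ℝ) • -x + -y = -((2 : ℝ) • x + y) by module,
    show (2 : ℝ) • -x - -y = -((2 : ℝ) • x - y) by module,
    show -x + -y = -(x + y) by module, show -x - -y = -(x - y) by module,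
    smul_neg, smul_neg]
  module

theorem Dmap_zero_left_of_even {g : X → Y} (hg : g.Even) (hg0 : g 0 = 0) (y : X) :
    Dmap g 0 y = (3 : ℝ) • (g ((2 : ℝ) • y) - (16 : ℝ) • g y) := by
  simp only [Dmap, smul_zero, zero_add, zero_sub, hg y, hg0]; module

theorem Dmap_zero_left_of_odd {g : X → Y} (hg : g.Odd) (y : X) :
    Dmap g 0 y = (3 : ℝ) • (g ((2 : ℝ) • y) - (2 : ℝ) • g y) := by
  have hg0 : g 0 = 0 := by
    have h := hg 0
    rw [neg_zero, eq_neg_iff_add_eq_zero, ← two_smul ℝ] at h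
    exact (smul_eq_zero.mp h).resolve_left two_ne_zero
  simp only [Dmap, smul_zero, zero_add, zero_sub, hg y, hg0]; module

theorem Dmap_smul_comp_smul (g : X → Y) (c a : ℝ) (x y : X) :
    Dmap (fun z => c • g (a • z)) x y = c • Dmap g (a • x) (a • y) := by
  simp only [Dmap, smul_add, smul_sub, smul_comm a (2 : ℝ)]
  module

theorem map_two_pow_smul {g : X → Y} {lam : ℝ} (hg : ∀ x, g ((2 : ℝ) • x) = lam • g x)
    (n : ℕ) (x : X) : g ((2 : ℝ) ^ n • x) = lam ^ n • g x := by
  induction n with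
  | zero => simp
  | succ n ih => rw [pow_succ', mul_smul, hg, ih, pow_succ', mul_smul]

theorem IsQuartic.map_zero {Q : X → Y} (hQ : IsQuartic Q) : Q 0 = 0 := by
  have h := hQ 0 0
  simp only [smul_zero, add_zero, sub_zero] at h
  have h24 : (24 : ℝ) • Q 0 = 0 := by linear_combination (norm := module) -h
  exact (smul_eq_zero.mp h24).resolve_left (by norm_num)

theorem IsQuartic.even {Q : X → Y} (hQ : IsQuartic Q) : Q.Even := by
  intro y
  have h := hQ 0 y
  simp only [smul_zero, zero_add, zero_sub, hQ.map_zero] at h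
  have h3 : (3 : ℝ) • (Q (-y) - Q y) = 0 := by linear_combination (norm := module) -h
  exact sub_eq_zero.mp ((smul_eq_zero.mp h3).resolve_left (by norm_num))

theorem IsQuartic.map_two_smul {Q : X → Y} (hQ : IsQuartic Q) (x : X) :
    Q ((2 : ℝ) • x) = (16 : ℝ) • Q x := by
  have h := hQ x 0
  simp only [add_zero, sub_zero, hQ.map_zero] at h
  have h2 : (2 : ℝ) • (Q ((2 : ℝ) • x) - (16 : ℝ) • Q x) = 0 := by
    linear_combination (norm := module) h
  exact sub_eq_zero.mp ((smul_eq_zero.mp h2).resolve_left two_ne_zero)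

theorem isQuartic_of_Dmap_eq_zero {Q : X → Y} (h16 : ∀ x, Q ((2 : ℝ) • x) = (16 : ℝ) • Q x)
    (hD : ∀ x y, Dmap Q x y = 0) : IsQuartic Q := by
  intro x y
  have h := hD x y
  rw [Dmap, h16 x, h16 y] at h
  linear_combination (norm := module) (7⁻¹ : ℝ) • h

def jensenDefect (A : X → Y) (x y : X) : Y := A (x + y) + A (x - y) - (2 : ℝ) • A x

theorem jensenDefect_two_smul_right {A : X → Y} (h2 : ∀ x, A ((2 : ℝ) • x) = (2 : ℝ) • A x)
    (h4 : ∀ x y, jensenDefect A ((2 : ℝ) • x) y = (4 : ℝ) • jensenDefect A x y) (x y : X) :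
    jensenDefect A x ((2 : ℝ) • y) = (2 : ℝ)⁻¹ • jensenDefect A x y := by
  have hom : ∀ u v, jensenDefect A ((2 : ℝ) • u) ((2 : ℝ) • v) = (2 : ℝ) • jensenDefect A u v := by
    intro u v
    simp only [jensenDefect]
    rw [← smul_add, ← smul_sub, h2, h2, h2]
    module
  have hx : (2 : ℝ) • (2 : ℝ)⁻¹ • x = x := by module
  have hhalf := hom ((2 : ℝ)⁻¹ • x) y
  have hquarter := h4 ((2 : ℝ)⁻¹ • x) y
  rw [hx] at hhalf hquarter
  rw [hhalf, hquarter]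
  module

theorem jensenDefect_add_sub_left {A : X → Y} (h2 : ∀ x, A ((2 : ℝ) • x) = (2 : ℝ) • A x)
    (h4 : ∀ x y, jensenDefect A ((2 : ℝ) • x) y = (4 : ℝ) • jensenDefect A x y)
    (x y : X) :
    jensenDefect A (x + y) y + jensenDefect A (x - y) y = (-(3 / 2) : ℝ) • jensenDefect A x y := by
  have e : jensenDefect A (x + y) y + jensenDefect A (x - y) y
      = jensenDefect A x ((2 : ℝ) • y) - (2 : ℝ) • jensenDefect A x y := by
    simp only [jensenDefect]
    rw [show x + y + y = x + (2 : ℝ) • y by module, show x + y - y = x by module,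
      show x - y + y = x by module, show x - y - y = x - (2 : ℝ) • y by module]
    module
  rw [e, jensenDefect_two_smul_right h2 h4]
  module

/-- Along `x + ℤ y` the defect obeys `T(x+y) + T(x-y) = -3/2 T(x)`; composing this step twice gives
`T(x+2y) + T(x-2y) = 1/4 T(x)`, while the same recursion for the step `2y` gives `-3/2 T(x)`. -/
theorem jensenDefect_eq_zero {A : X → Y} (h2 : ∀ x, A ((2 : ℝ) • x) = (2 : ℝ) • A x)
    (h4 : ∀ x y, jensenDefect A ((2 : ℝ) • x) y = (4 : ℝ) • jensenDefect A x y)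
    (x y : X) : jensenDefect A x y = 0 := by
  have hstep := jensenDefect_add_sub_left h2 h4
  have hp := hstep (x + y) y
  have hm := hstep (x - y) y
  have hxy := hstep x y
  have hdouble := hstep x ((2 : ℝ) • y)
  rw [show x + y + y = x + (2 : ℝ) • y by module, show x + y - y = x by module] at hp
  rw [show x - y + y = x by module, show x - y - y = x - (2 : ℝ) • y by module] at hm
  simp only [jensenDefect_two_smul_right h2 h4] at hdouble
  have h74 : (7 / 4 : ℝ) • jensenDefect A x y = 0 := by
    linear_combination (norm := module) (3 / 2 : ℝ) • hxy + (2 : ℝ) • hdouble - hp - hm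
  exact (smul_eq_zero.mp h74).resolve_left (by norm_num)

theorem map_add_of_jensenDefect_eq_zero {A : X → Y}
    (h2 : ∀ x, A ((2 : ℝ) • x) = (2 : ℝ) • A x) (h0 : ∀ x y, jensenDefect A x y = 0)
    (x y : X) : A (x + y) = A x + A y := by
  have h := h0 ((2 : ℝ)⁻¹ • (x + y)) ((2 : ℝ)⁻¹ • (x - y))
  rw [jensenDefect, show (2 : ℝ)⁻¹ • (x + y) + (2 : ℝ)⁻¹ • (x - y) = x by module,
    show (2 : ℝ)⁻¹ • (x + y) - (2 : ℝ)⁻¹ • (x - y) = y by module, ← h2,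
    show (2 : ℝ) • (2 : ℝ)⁻¹ • (x + y) = x + y by module] at h
  linear_combination (norm := module) -h

theorem additive_of_Dmap_eq_zero {A : X → Y} (h2 : ∀ x, A ((2 : ℝ) • x) = (2 : ℝ) • A x)
    (hD : ∀ x y, Dmap A x y = 0) (x y : X) : A (x + y) = A x + A y := by
  refine map_add_of_jensenDefect_eq_zero h2 (jensenDefect_eq_zero h2 (fun x y => ?_)) x y
  have h := hD x y
  rw [Dmap, h2 x, h2 y] at h
  simp only [jensenDefect]
  rw [h2 x]
  linear_combination (norm := module) (7⁻¹ : ℝ) • h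

end FunctionalEquations

theorem Real.zero_rpow_le_rpow (p : ℝ) {t : ℝ} (ht : 0 ≤ t) : (0 : ℝ) ^ p ≤ t ^ p := by
  rcases eq_or_ne p 0 with rfl | hp
  · simp
  · rw [Real.zero_rpow hp]; exact Real.rpow_nonneg ht p

section Stability

variable {X Y : Type*} [NormedAddCommGroup X] [NormedSpace ℝ X]
  [NormedAddCommGroup Y] [NormedSpace ℝ Y] {θ p : ℝ}

theorem norm_two_pow_smul_rpow (x : X) (n : ℕ) :
    ‖(2 : ℝ) ^ n • x‖ ^ p = ((2 : ℝ) ^ p) ^ n * ‖x‖ ^ p := by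
  rw [norm_smul, Real.norm_of_nonneg (by positivity),
    Real.mul_rpow (by positivity) (norm_nonneg x), ← Real.rpow_natCast, ← Real.rpow_natCast,
    ← Real.rpow_mul zero_le_two, ← Real.rpow_mul zero_le_two, mul_comm (n : ℝ) p]

theorem eq_zero_of_map_two_smul_of_norm_le {h : X → Y} {lam M : ℝ} (hlam : (2 : ℝ) ^ p < lam)
    (h2 : ∀ x, h ((2 : ℝ) • x) = lam • h x) (hM : ∀ x, ‖h x‖ ≤ M * ‖x‖ ^ p) (x : X) :
    h x = 0 := by
  have hlam0 : 0 < lam := (Real.rpow_pos_of_pos two_pos p).trans hlam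
  have hq : (2 : ℝ) ^ p / lam < 1 := (div_lt_one hlam0).mpr hlam
  have hle : ∀ n : ℕ, ‖h x‖ ≤ M * ‖x‖ ^ p * ((2 : ℝ) ^ p / lam) ^ n := by
    intro n
    have hn := hM ((2 : ℝ) ^ n • x)
    rw [map_two_pow_smul h2, norm_smul, norm_two_pow_smul_rpow,
      Real.norm_of_nonneg (by positivity)] at hn
    calc ‖h x‖ ≤ M * (((2 : ℝ) ^ p) ^ n * ‖x‖ ^ p) / lam ^ n := by
          rw [le_div_iff₀ (by positivity), mul_comm]; exact hn
      _ = M * ‖x‖ ^ p * ((2 : ℝ) ^ p / lam) ^ n := by ring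
  have hlim : Tendsto (fun n : ℕ => M * ‖x‖ ^ p * ((2 : ℝ) ^ p / lam) ^ n) atTop (𝓝 0) := by
    simpa using (tendsto_pow_atTop_nhds_zero_of_lt_one (by positivity) hq).const_mul
      (M * ‖x‖ ^ p)
  exact norm_le_zero_iff.mp (ge_of_tendsto' hlim hle)

theorem exists_tendsto_of_norm_map_two_smul_sub_le [CompleteSpace Y] {g : X → Y} {c lam : ℝ}
    (hlam : (2 : ℝ) ^ p < lam) (hstep : ∀ x, ‖g ((2 : ℝ) • x) - lam • g x‖ ≤ c * ‖x‖ ^ p) :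
    ∃ L : X → Y,
      (∀ x, Tendsto (fun n : ℕ => (lam ^ n)⁻¹ • g ((2 : ℝ) ^ n • x)) atTop (𝓝 (L x))) ∧
      ∀ x, ‖g x - L x‖ ≤ c / (lam - (2 : ℝ) ^ p) * ‖x‖ ^ p := by
  have hlam0 : 0 < lam := (Real.rpow_pos_of_pos two_pos p).trans hlam
  have hq : (2 : ℝ) ^ p / lam < 1 := (div_lt_one hlam0).mpr hlam
  set u : X → ℕ → Y := fun x n => (lam ^ n)⁻¹ • g ((2 : ℝ) ^ n • x)
  have hdist : ∀ x n,
      dist (u x n) (u x (n + 1)) ≤ c / lam * ‖x‖ ^ p * ((2 : ℝ) ^ p / lam) ^ n := by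
    intro x n
    have e : u x n - u x (n + 1) =
        -(lam ^ (n + 1))⁻¹ • (g ((2 : ℝ) • (2 : ℝ) ^ n • x) - lam • g ((2 : ℝ) ^ n • x)) := by
      have hinv : (lam ^ n)⁻¹ = (lam ^ (n + 1))⁻¹ * lam := by
        rw [pow_succ, mul_inv, inv_mul_cancel_right₀ hlam0.ne']
      simp only [u]
      rw [pow_succ' (2 : ℝ), mul_smul, hinv]
      module
    rw [dist_eq_norm, e, norm_smul, norm_neg, Real.norm_of_nonneg (by positivity)]
    calc (lam ^ (n + 1))⁻¹ * ‖g ((2 : ℝ) • (2 : ℝ) ^ n • x) - lam • g ((2 : ℝ) ^ n • x)‖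
        ≤ (lam ^ (n + 1))⁻¹ * (c * (((2 : ℝ) ^ p) ^ n * ‖x‖ ^ p)) := by
          rw [← norm_two_pow_smul_rpow]; gcongr; exact hstep _
      _ = c / lam * ‖x‖ ^ p * ((2 : ℝ) ^ p / lam) ^ n := by
          rw [div_pow]
          field_simp
          ring
  choose L hL using fun x => cauchySeq_tendsto_of_complete
    (cauchySeq_of_le_geometric _ _ hq (hdist x))
  refine ⟨L, hL, fun x => ?_⟩
  have hlim := dist_le_of_le_geometric_of_tendsto₀ _ _ hq (hdist x) (hL x)
  rw [dist_eq_norm] at hlim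
  calc ‖g x - L x‖ ≤ c / lam * ‖x‖ ^ p / (1 - (2 : ℝ) ^ p / lam) := by simpa [u] using hlim
    _ = c / (lam - (2 : ℝ) ^ p) * ‖x‖ ^ p := by
      field_simp [(sub_pos.mpr hlam).ne']

theorem map_two_smul_of_tendsto {g L : X → Y} {lam : ℝ} (hlam : lam ≠ 0)
    (hL : ∀ x, Tendsto (fun n : ℕ => (lam ^ n)⁻¹ • g ((2 : ℝ) ^ n • x)) atTop (𝓝 (L x)))
    (x : X) : L ((2 : ℝ) • x) = lam • L x := by
  have hshift : Tendsto (fun n : ℕ => lam • ((lam ^ (n + 1))⁻¹ • g ((2 : ℝ) ^ (n + 1) • x)))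
      atTop (𝓝 (lam • L x)) :=
    ((hL x).comp (tendsto_add_atTop_nat 1)).const_smul lam
  refine tendsto_nhds_unique (hL ((2 : ℝ) • x)) (hshift.congr fun n => ?_)
  rw [smul_smul, pow_succ lam, mul_inv, mul_comm ((lam ^ n)⁻¹), mul_inv_cancel_left₀ hlam,
    pow_succ, mul_smul]

theorem tendsto_Dmap {ι : Type*} {l : Filter ι} {u : ι → X → Y} {L : X → Y}
    (hu : ∀ x, Tendsto (fun i => u i x) l (𝓝 (L x))) (x y : X) :
    Tendsto (fun i => Dmap (u i) x y) l (𝓝 (Dmap L x y)) :=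
  ((((hu _).add (hu _)).const_smul (7 : ℝ)).sub (((hu _).add (hu _)).const_smul (28 : ℝ))).add
    (((hu _).sub ((hu y).const_smul (2 : ℝ))).const_smul (3 : ℝ)) |>.sub
    (((hu _).sub ((hu x).const_smul (4 : ℝ))).const_smul (14 : ℝ))

theorem Dmap_eq_zero_of_tendsto {g L : X → Y} {lam : ℝ} (hlam : (2 : ℝ) ^ p < lam)
    (hD : ∀ x y, ‖Dmap g x y‖ ≤ θ * (‖x‖ ^ p + ‖y‖ ^ p))
    (hL : ∀ x, Tendsto (fun n : ℕ => (lam ^ n)⁻¹ • g ((2 : ℝ) ^ n • x)) atTop (𝓝 (L x)))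
    (x y : X) : Dmap L x y = 0 := by
  have hlam0 : 0 < lam := (Real.rpow_pos_of_pos two_pos p).trans hlam
  have hq : (2 : ℝ) ^ p / lam < 1 := (div_lt_one hlam0).mpr hlam
  have hgeom : Tendsto (fun n : ℕ => θ * (‖x‖ ^ p + ‖y‖ ^ p) * ((2 : ℝ) ^ p / lam) ^ n) atTop
      (𝓝 0) := by
    simpa using (tendsto_pow_atTop_nhds_zero_of_lt_one (by positivity) hq).const_mul
      (θ * (‖x‖ ^ p + ‖y‖ ^ p))
  refine tendsto_nhds_unique (tendsto_Dmap hL x y) (squeeze_zero_norm (fun n => ?_) hgeom)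
  rw [Dmap_smul_comp_smul, norm_smul, Real.norm_of_nonneg (by positivity)]
  calc (lam ^ n)⁻¹ * ‖Dmap g ((2 : ℝ) ^ n • x) ((2 : ℝ) ^ n • y)‖
      ≤ (lam ^ n)⁻¹ * (θ * (‖(2 : ℝ) ^ n • x‖ ^ p + ‖(2 : ℝ) ^ n • y‖ ^ p)) := by
        gcongr; exact hD _ _
    _ = θ * (‖x‖ ^ p + ‖y‖ ^ p) * ((2 : ℝ) ^ p / lam) ^ n := by
        rw [norm_two_pow_smul_rpow, norm_two_pow_smul_rpow, div_pow]
        field_simp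

theorem norm_Dmap_evenPart_le {f : X → Y} (hD : ∀ x y, ‖Dmap f x y‖ ≤ θ * (‖x‖ ^ p + ‖y‖ ^ p))
    (x y : X) : ‖Dmap (evenPart f) x y‖ ≤ θ * (‖x‖ ^ p + ‖y‖ ^ p) := by
  rw [Dmap_evenPart]
  exact norm_evenPart_le (φ := fun v : X × X => θ * (‖v.1‖ ^ p + ‖v.2‖ ^ p))
    (fun v => hD v.1 v.2) (fun v => by simp only [Prod.fst_neg, Prod.snd_neg, norm_neg]) (x, y)

theorem norm_Dmap_oddPart_le {f : X → Y} (hD : ∀ x y, ‖Dmap f x y‖ ≤ θ * (‖x‖ ^ p + ‖y‖ ^ p))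
    (x y : X) : ‖Dmap (oddPart f) x y‖ ≤ θ * (‖x‖ ^ p + ‖y‖ ^ p) := by
  rw [Dmap_oddPart]
  exact norm_oddPart_le (φ := fun v : X × X => θ * (‖v.1‖ ^ p + ‖v.2‖ ^ p))
    (fun v => hD v.1 v.2) (fun v => by simp only [Prod.fst_neg, Prod.snd_neg, norm_neg]) (x, y)

-- `‖0‖ ^ p` is `1`, not `0`, when `p = 0`.
theorem norm_Dmap_zero_left_le {g : X → Y} (hθ : 0 ≤ θ)
    (hD : ∀ x y, ‖Dmap g x y‖ ≤ θ * (‖x‖ ^ p + ‖y‖ ^ p)) (y : X) :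
    ‖Dmap g 0 y‖ ≤ 2 * θ * ‖y‖ ^ p := by
  calc ‖Dmap g 0 y‖ ≤ θ * (‖(0 : X)‖ ^ p + ‖y‖ ^ p) := hD 0 y
    _ ≤ θ * (‖y‖ ^ p + ‖y‖ ^ p) := by
      rw [norm_zero]
      exact mul_le_mul_of_nonneg_left
        (add_le_add_left (Real.zero_rpow_le_rpow p (norm_nonneg y)) _) hθ
    _ = 2 * θ * ‖y‖ ^ p := by ring

theorem exists_isQuartic_near_of_even [CompleteSpace Y] {g : X → Y} (hθ : 0 ≤ θ)
    (hp : (2 : ℝ) ^ p < 16) (hg : g.Even) (hg0 : g 0 = 0)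
    (hD : ∀ x y, ‖Dmap g x y‖ ≤ θ * (‖x‖ ^ p + ‖y‖ ^ p)) :
    ∃ Q : X → Y, IsQuartic Q ∧ ∀ x, ‖g x - Q x‖ ≤ 2 * θ / 3 / (16 - (2 : ℝ) ^ p) * ‖x‖ ^ p := by
  have hstep : ∀ y, ‖g ((2 : ℝ) • y) - (16 : ℝ) • g y‖ ≤ 2 * θ / 3 * ‖y‖ ^ p := by
    intro y
    have h := norm_Dmap_zero_left_le hθ hD y
    rw [Dmap_zero_left_of_even hg hg0, norm_smul, Real.norm_of_nonneg (by norm_num)] at h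
    linarith
  obtain ⟨Q, hQ, hgQ⟩ := exists_tendsto_of_norm_map_two_smul_sub_le hp hstep
  exact ⟨Q, isQuartic_of_Dmap_eq_zero (map_two_smul_of_tendsto (by norm_num) hQ)
    (Dmap_eq_zero_of_tendsto hp hD hQ), hgQ⟩

theorem exists_additive_near_of_odd [CompleteSpace Y] {g : X → Y} (hθ : 0 ≤ θ)
    (hp : (2 : ℝ) ^ p < 2) (hg : g.Odd)
    (hD : ∀ x y, ‖Dmap g x y‖ ≤ θ * (‖x‖ ^ p + ‖y‖ ^ p)) :
    ∃ A : X → Y, (∀ x y, A (x + y) = A x + A y) ∧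
      ∀ x, ‖g x - A x‖ ≤ 2 * θ / 3 / (2 - (2 : ℝ) ^ p) * ‖x‖ ^ p := by
  have hstep : ∀ y, ‖g ((2 : ℝ) • y) - (2 : ℝ) • g y‖ ≤ 2 * θ / 3 * ‖y‖ ^ p := by
    intro y
    have h := norm_Dmap_zero_left_le hθ hD y
    rw [Dmap_zero_left_of_odd hg, norm_smul, Real.norm_of_nonneg (by norm_num)] at h
    linarith
  obtain ⟨A, hA, hgA⟩ := exists_tendsto_of_norm_map_two_smul_sub_le hp hstep
  exact ⟨A, additive_of_Dmap_eq_zero (map_two_smul_of_tendsto two_ne_zero hA)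
    (Dmap_eq_zero_of_tendsto hp hD hA), hgA⟩

theorem eq_of_map_two_smul_of_norm_sub_le {g L L' : X → Y} {lam C C' : ℝ}
    (hlam : (2 : ℝ) ^ p < lam) (hL : ∀ x, L ((2 : ℝ) • x) = lam • L x)
    (hL' : ∀ x, L' ((2 : ℝ) • x) = lam • L' x) (hgL : ∀ x, ‖g x - L x‖ ≤ C * ‖x‖ ^ p)
    (hgL' : ∀ x, ‖g x - L' x‖ ≤ C' * ‖x‖ ^ p) : L = L' := by
  refine funext fun x => sub_eq_zero.mp <|
    eq_zero_of_map_two_smul_of_norm_le (h := fun x => L x - L' x) (M := C + C') hlam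
      (fun x => by rw [hL, hL', smul_sub]) (fun x => ?_) x
  calc ‖L x - L' x‖ = ‖(g x - L' x) - (g x - L x)‖ := by congr 1; abel
    _ ≤ C' * ‖x‖ ^ p + C * ‖x‖ ^ p := (norm_sub_le _ _).trans (add_le_add (hgL' x) (hgL x))
    _ = (C + C') * ‖x‖ ^ p := by ring

end Stability

theorem rassias_constant_le {θ r : ℝ} (hθ : 0 ≤ θ) (hr : r < 2) :
    2 * θ / 3 / (16 - r) + 2 * θ / 3 / (2 - r) ≤ θ / 48 * (16 / (16 - r) + 96 / (1 - r / 2)) := by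
  have h2 : 0 < 2 - r := by linarith
  have h16 : 2 * θ / 3 / (16 - r) ≤ 2 * θ / 3 / (2 - r) :=
    div_le_div_of_nonneg_left (by positivity) h2 (by linarith)
  have h96 : θ / 48 * (96 / (1 - r / 2)) = 4 * θ / (2 - r) := by
    field_simp; ring
  have hnonneg : 0 ≤ θ / 48 * (16 / (16 - r)) := by
    have : 0 < 16 - r := by linarith
    positivity
  rw [mul_add, h96]
  have : 2 * θ / 3 / (2 - r) ≤ 2 * θ / (2 - r) := by gcongr; linarith
  have : 2 * θ / (2 - r) + 2 * θ / (2 - r) = 4 * θ / (2 - r) := by ring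
  linarith

theorem rassias_stability {X Y : Type*} [NormedAddCommGroup X] [NormedSpace ℝ X]
    [NormedAddCommGroup Y] [NormedSpace ℝ Y] [CompleteSpace Y]
    (θ p : ℝ) (hθ : 0 ≤ θ) (hp : p < 1)
    (f : X → Y) (hD : ∀ x y : X, ‖Dmap f x y‖ ≤ θ * (‖x‖ ^ p + ‖y‖ ^ p)) (hf0 : f 0 = 0) :
    ∃ (Q A : X → Y), IsQuartic Q ∧ (∀ x y : X, A (x + y) = A x + A y) ∧
      (∀ x : X, ‖f x - Q x - A x‖ ≤
        (θ / 48) * ‖x‖ ^ p * (16 / (16 - (2 : ℝ) ^ p) + 96 / (1 - (2 : ℝ) ^ (p - 1)))) ∧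
      ∀ Q' A' : X → Y, IsQuartic Q' → (∀ x y : X, A' (x + y) = A' x + A' y) →
        (∀ x : X, ‖f x - Q' x - A' x‖ ≤
          (θ / 48) * ‖x‖ ^ p * (16 / (16 - (2 : ℝ) ^ p) + 96 / (1 - (2 : ℝ) ^ (p - 1)))) →
        Q' = Q ∧ A' = A := by
  have hr : (2 : ℝ) ^ p < 2 := by
    simpa using Real.rpow_lt_rpow_of_exponent_lt one_lt_two hp
  obtain ⟨Q, hQ, hfQ⟩ := exists_isQuartic_near_of_even hθ (hr.trans (by norm_num))
    (evenPart_even f) (by simp [evenPart, hf0]) (norm_Dmap_evenPart_le hD)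
  obtain ⟨A, hA, hfA⟩ :=
    exists_additive_near_of_odd hθ hr (oddPart_odd f) (norm_Dmap_oddPart_le hD)
  set K := 16 / (16 - (2 : ℝ) ^ p) + 96 / (1 - (2 : ℝ) ^ (p - 1))
  have hK : 2 * θ / 3 / (16 - (2 : ℝ) ^ p) + 2 * θ / 3 / (2 - (2 : ℝ) ^ p) ≤ θ / 48 * K := by
    simpa [K, Real.rpow_sub two_pos] using rassias_constant_le hθ hr
  refine ⟨Q, A, hQ, hA, fun x => ?_, fun Q' A' hQ' hA' hclose' => ?_⟩
  · calc ‖f x - Q x - A x‖ = ‖(evenPart f x - Q x) + (oddPart f x - A x)‖ := by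
          rw [← evenPart_add_oddPart f x]; congr 1; abel
      _ ≤ (2 * θ / 3 / (16 - (2 : ℝ) ^ p) + 2 * θ / 3 / (2 - (2 : ℝ) ^ p)) * ‖x‖ ^ p := by
          rw [add_mul]; exact (norm_add_le _ _).trans (add_le_add (hfQ x) (hfA x))
      _ ≤ θ / 48 * ‖x‖ ^ p * K := by
          rw [mul_right_comm]; gcongr
  have hφ : (fun x : X => θ / 48 * K * ‖x‖ ^ p).Even := fun x => by simp only [norm_neg]
  have hclose'' : ∀ x, ‖f x - Q' x - A' x‖ ≤ θ / 48 * K * ‖x‖ ^ p := fun x =>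
    (hclose' x).trans_eq (by ring)
  have hQ'even := hQ'.even
  have hA'odd : A'.Odd := (AddMonoidHom.mk' A' hA').map_neg
  refine ⟨eq_of_map_two_smul_of_norm_sub_le (C := θ / 48 * K) (hr.trans (by norm_num))
    hQ'.map_two_smul hQ.map_two_smul (fun x => ?_) hfQ,
    eq_of_map_two_smul_of_norm_sub_le (C := θ / 48 * K) hr ?_ ?_ (fun x => ?_) hfA⟩
  · rw [← evenPart_sub_sub hQ'even hA'odd]
    exact norm_evenPart_le hclose'' hφ x
  · intro x; rw [two_smul, two_smul, hA']
  · intro x; rw [two_smul, two_smul, hA]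
  · rw [← oddPart_sub_sub hQ'even hA'odd]
    exact norm_oddPart_le hclose'' hφ x
end

section
/- Let X be a real normed space, Y a real Banach space, and ψ : X × X → [0, ∞) a function such that the series ∑_{i=0}^∞ 16^i ψ(0, 2^{-i-1} x) converges for all x in X and lim_{n→∞} 16^n ψ(2^{-n} x, 2^{-n} y) = 0 for all x, y in X. Suppose f : X → Y satisfies ‖D_f(x,y)‖ ≤ ψ(x,y) for all x, y in X and f(0) = 0. Then there exist a unique quartic function Q : X → Y and a unique additive function A : X → Y such that ‖f(x) - Q(x) - A(x)‖ ≤ ∑_{i=0}^∞ (16^i/3 + 2^i) · (ψ(0, 2^{-i-1} x) + ψ(0, -2^{-i-1} x))/2 for all x in X. -/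
open Filter Topology

section Alg
variable {X Y : Type*} [AddCommGroup X] [Module ℝ X] [AddCommGroup Y] [Module ℝ Y]

lemma scale_lemma (P : X → Y) (s : ℝ) (h : ∀ w, P ((2:ℝ) • w) = s • P w) :
    ∀ (n : ℕ) (x : X), P x = s ^ n • P ((2:ℝ) ^ (-(n:ℤ)) • x) := by
  intro n x
  induction n with
  | zero => simp
  | succ n ih =>
    have e2 : (2:ℝ) * (2:ℝ) ^ (-((n+1:ℕ):ℤ)) = (2:ℝ) ^ (-(n:ℤ)) := by
      rw [← zpow_one_add₀ (by norm_num : (2:ℝ) ≠ 0)]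
      congr 1
      push_cast; ring
    calc P x = s ^ n • P ((2:ℝ) ^ (-(n:ℤ)) • x) := ih
      _ = s ^ n • P ((2:ℝ) • ((2:ℝ) ^ (-((n+1:ℕ):ℤ)) • x)) := by rw [smul_smul, e2]
      _ = s ^ (n+1) • P ((2:ℝ) ^ (-((n+1:ℕ):ℤ)) • x) := by
          rw [h, smul_smul, ← pow_succ]

lemma zz_shift (i n : ℕ) (x : X) :
    (2:ℝ) ^ (-(i:ℤ)-1) • ((2:ℝ) ^ (-(n:ℤ)) • x) = (2:ℝ) ^ (-((i+n:ℕ):ℤ)-1) • x := by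
  rw [smul_smul, ← zpow_add₀ (by norm_num : (2:ℝ) ≠ 0)]
  congr 1
  push_cast; ring

lemma z_succ (n : ℕ) (x : X) :
    (2:ℝ) ^ (-(n:ℤ)) • x = (2:ℝ) • ((2:ℝ) ^ (-(n:ℤ)-1) • x) := by
  rw [smul_smul]
  congr 1
  rw [← zpow_one_add₀ (by norm_num : (2:ℝ) ≠ 0)]
  congr 1
  ring

lemma cast_succ_exp (n : ℕ) : (2:ℝ) ^ (-((n+1:ℕ):ℤ)) = (2:ℝ) ^ (-(n:ℤ)-1) := by
  congr 1
  push_cast; ring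

lemma quartic_of_D0 (Q : X → Y) (heven : ∀ x, Q (-x) = Q x)
    (hD : ∀ x y, Dmap Q x y = 0) : IsQuartic Q := by
  have h00 : Q 0 = 0 := by
    have h := hD 0 0
    simp only [Dmap, smul_zero, zero_add, zero_sub, add_zero, sub_zero] at h
    linear_combination (norm := module) (-1/3 : ℝ) • h
  have hdb : ∀ y : X, Q ((2:ℝ) • y) = (16:ℝ) • Q y := by
    intro y
    have h := hD 0 y
    simp only [Dmap, smul_zero, zero_add, zero_sub] at h
    rw [heven y, h00] at h
    linear_combination (norm := module) (1/3 : ℝ) • h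
  intro x y
  have h := hD x y
  simp only [Dmap] at h
  rw [hdb x, hdb y] at h
  linear_combination (norm := module) (1/7 : ℝ) • h

lemma additive_of_D0 (A : X → Y) (hodd : ∀ x, A (-x) = -A x)
    (hD : ∀ x y, Dmap A x y = 0) : ∀ x y, A (x + y) = A x + A y := by
  have h00 : A 0 = 0 := by
    have h := hodd 0
    rw [neg_zero] at h
    linear_combination (norm := module) (1/2 : ℝ) • h
  have hdb : ∀ y : X, A ((2:ℝ) • y) = (2:ℝ) • A y := by
    intro y
    have h := hD 0 y
    simp only [Dmap, smul_zero, zero_add, zero_sub] at h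
    rw [hodd y, h00] at h
    linear_combination (norm := module) (1/3 : ℝ) • h
  have hE : ∀ x y : X, A ((2:ℝ) • x + y) + A ((2:ℝ) • x - y)
      = (4:ℝ) • A (x + y) + (4:ℝ) • A (x - y) - (4:ℝ) • A x := by
    intro x y
    have h := hD x y
    simp only [Dmap] at h
    rw [hdb x, hdb y] at h
    linear_combination (norm := module) (1/7 : ℝ) • h
  have hP2 : ∀ x y : X, (2:ℝ) • A (x + y) + (2:ℝ) • A (x - y)
      = (4:ℝ) • A (x + (2:ℝ) • y) + (4:ℝ) • A (x - (2:ℝ) • y) - (4:ℝ) • A x := by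
    intro x y
    have h := hE x ((2:ℝ) • y)
    have e1 : (2:ℝ) • x + (2:ℝ) • y = (2:ℝ) • (x + y) := by module
    have e2 : (2:ℝ) • x - (2:ℝ) • y = (2:ℝ) • (x - y) := by module
    rw [e1, e2, hdb (x + y), hdb (x - y)] at h
    exact h
  have hR3 : ∀ x y : X, A (x + (2:ℝ) • y) - A (x - (2:ℝ) • y)
      = (4:ℝ) • A (x + y) - (4:ℝ) • A (x - y) - (4:ℝ) • A y := by
    intro x y
    have h := hE y x
    have e1 : (2:ℝ) • y + x = x + (2:ℝ) • y := by module
    have e2 : (2:ℝ) • y - x = -(x - (2:ℝ) • y) := by module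
    have e3 : y + x = x + y := by module
    have e4 : y - x = -(x - y) := by module
    rw [e1, e2, e3, e4, hodd, hodd] at h
    linear_combination (norm := module) h
  have hF1 : ∀ x y : X, A (x + (2:ℝ) • y) - A (x + y) - A y
      = -(4⁻¹:ℝ) • (A (x + y) + A (x - y) - (2:ℝ) • A x)
        + (3/2 : ℝ) • (A (x + y) - A (x - y) - (2:ℝ) • A y) := by
    intro x y
    linear_combination (norm := module) (-(1/8 : ℝ)) • hP2 x y + (1/2 : ℝ) • hR3 x y
  have hR4 : ∀ x y : X, (2:ℝ) • A (x + y) - (2:ℝ) • A (x - y)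
      = (4:ℝ) • A ((2:ℝ) • x + y) - (4:ℝ) • A ((2:ℝ) • x - y) - (4:ℝ) • A y := by
    intro x y
    have h := hE y ((2:ℝ) • x)
    have e1 : (2:ℝ) • y + (2:ℝ) • x = (2:ℝ) • (x + y) := by module
    have e2 : (2:ℝ) • y - (2:ℝ) • x = -((2:ℝ) • (x - y)) := by module
    have e3 : y + (2:ℝ) • x = (2:ℝ) • x + y := by module
    have e4 : y - (2:ℝ) • x = -((2:ℝ) • x - y) := by module
    rw [e1, e2, e3, e4, hodd, hodd, hdb (x + y), hdb (x - y)] at h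
    linear_combination (norm := module) h
  have hF2 : ∀ x y : X, A ((2:ℝ) • x + y) - A x - A (x + y)
      = (3/2 : ℝ) • (A (x + y) + A (x - y) - (2:ℝ) • A x)
        - (4⁻¹:ℝ) • (A (x + y) - A (x - y) - (2:ℝ) • A y) := by
    intro x y
    linear_combination (norm := module) (1/2 : ℝ) • hE x y - (1/8 : ℝ) • hR4 x y
  intro u v
  have eqI := hF1 (u - v) v
  rw [show u - v + (2:ℝ) • v = u + v by module, show u - v + v = u by module,
      show u - v - v = u - (2:ℝ) • v by module] at eqI
  have eqI' := hF1 (u + v) (-v)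
  rw [show u + v + (2:ℝ) • (-v) = u - v by module, show u + v + -v = u by module,
      show u + v - -v = u + (2:ℝ) • v by module, hodd v] at eqI'
  have eqII := hF2 v u
  rw [show (2:ℝ) • v + u = u + (2:ℝ) • v by module, show v + u = u + v by module,
      show v - u = -(u - v) by module, hodd (u - v)] at eqII
  have eqIII := hF2 v (-u)
  rw [show (2:ℝ) • v + -u = -(u - (2:ℝ) • v) by module, show v + -u = -(u - v) by module,
      show v - -u = u + v by module, hodd (u - v), hodd (u - (2:ℝ) • v), hodd u] at eqIII
  linear_combination (norm := module) (3/11 : ℝ) • eqI + (5/11 : ℝ) • eqI'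
    - (35/44 : ℝ) • eqII + (21/44 : ℝ) • eqIII

lemma quartic_double (P : X → Y) (hq : IsQuartic P) :
    P 0 = 0 ∧ ∀ w, P ((2:ℝ) • w) = (16:ℝ) • P w := by
  have h0 : P 0 = 0 := by
    have h := hq 0 0
    simp only [smul_zero, add_zero, sub_zero] at h
    linear_combination (norm := module) (-1/24 : ℝ) • h
  refine ⟨h0, fun w => ?_⟩
  have h := hq w 0
  simp only [add_zero, sub_zero, h0] at h
  linear_combination (norm := module) (1/2 : ℝ) • h

end Alg

private lemma arith1 {a b c : ℝ} (hc : 0 ≤ c) (hba : b ≤ a) :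
    (a/3 + b) * (c/2) ≤ 4 * (a * (c/6)) := by nlinarith

private lemma arith2 {a b c : ℝ} (hc : 0 ≤ c) (hb : 0 ≤ b) :
    a * (c/6) + b * (c/6) ≤ (a/3 + b) * (c/2) := by nlinarith

private lemma arith3 {r p q c : ℝ} (hr : 0 ≤ r) (hc : 0 ≤ c) (hqp : q ≤ p) :
    (r * 2) * ((p/3 + q) * (c/2)) ≤ 8 * (p * r * (c/6)) := by
  nlinarith [mul_le_mul_of_nonneg_right (mul_le_mul_of_nonneg_right hqp hc) hr]

set_option maxHeartbeats 2000000 in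
theorem mixed_stability' {X Y : Type*} [NormedAddCommGroup X] [NormedSpace ℝ X]
    [NormedAddCommGroup Y] [NormedSpace ℝ Y] [CompleteSpace Y]
    (ψ : X → X → ℝ) (hψ : ∀ x y : X, 0 ≤ ψ x y)
    (hsum : ∀ x : X, Summable fun i : ℕ => (16 : ℝ) ^ i * ψ 0 ((2 : ℝ) ^ (-(i : ℤ) - 1) • x))
    (hlim : ∀ x y : X,
      Tendsto (fun n : ℕ =>
        (16 : ℝ) ^ n * ψ ((2 : ℝ) ^ (-(n : ℤ)) • x) ((2 : ℝ) ^ (-(n : ℤ)) • y)) atTop (𝓝 0))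
    (f : X → Y) (hD : ∀ x y : X, ‖Dmap f x y‖ ≤ ψ x y) (hf0 : f 0 = 0) :
    ∃ (Q A : X → Y), IsQuartic Q ∧ (∀ x y : X, A (x + y) = A x + A y) ∧
      (∀ x : X, ‖f x - Q x - A x‖ ≤ ∑' i : ℕ,
        ((16 : ℝ) ^ i / 3 + 2 ^ i) *
          ((ψ 0 ((2 : ℝ) ^ (-(i : ℤ) - 1) • x) + ψ 0 (-((2 : ℝ) ^ (-(i : ℤ) - 1) • x))) / 2)) ∧
      ∀ Q' A' : X → Y, IsQuartic Q' → (∀ x y : X, A' (x + y) = A' x + A' y) →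
        (∀ x : X, ‖f x - Q' x - A' x‖ ≤ ∑' i : ℕ,
          ((16 : ℝ) ^ i / 3 + 2 ^ i) *
            ((ψ 0 ((2 : ℝ) ^ (-(i : ℤ) - 1) • x) + ψ 0 (-((2 : ℝ) ^ (-(i : ℤ) - 1) • x))) / 2)) →
        Q' = Q ∧ A' = A := by
  classical
  -- abbreviations
  set s : ℕ → X → ℝ := fun i x =>
    ψ 0 ((2 : ℝ) ^ (-(i : ℤ) - 1) • x) + ψ 0 (-((2 : ℝ) ^ (-(i : ℤ) - 1) • x)) with hs_def
  have hs_nonneg : ∀ i x, 0 ≤ s i x := fun i x => add_nonneg (hψ _ _) (hψ _ _)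
  -- even and odd parts
  set g : X → Y := fun x => (2:ℝ)⁻¹ • (f x + f (-x)) with hg_def
  set h : X → Y := fun x => (2:ℝ)⁻¹ • (f x - f (-x)) with hh_def
  have hgh : ∀ x, f x = g x + h x := by
    intro x; simp only [hg_def, hh_def]; module
  have hgeven : ∀ x, g (-x) = g x := by
    intro x; simp only [hg_def, neg_neg]; module
  have hhodd : ∀ x, h (-x) = -h x := by
    intro x; simp only [hh_def, neg_neg]; module
  have hg0 : g 0 = 0 := by simp [hg_def, hf0]
  have hh0 : h 0 = 0 := by simp [hh_def, hf0]
  -- basic estimate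
  have E0 : ∀ y : X, ‖(3:ℝ) • f ((2:ℝ) • y) - (27:ℝ) • f y - (21:ℝ) • f (-y)‖ ≤ ψ 0 y := by
    intro y
    have hkey : Dmap f 0 y = (3:ℝ) • f ((2:ℝ) • y) - (27:ℝ) • f y - (21:ℝ) • f (-y) := by
      simp only [Dmap, smul_zero, zero_add, zero_sub, hf0]
      module
    rw [← hkey]; exact hD 0 y
  -- even part estimate
  have heg : ∀ y : X, ‖g ((2:ℝ) • y) - (16:ℝ) • g y‖ ≤ (ψ 0 y + ψ 0 (-y)) / 6 := by
    intro y
    have h1 := E0 y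
    have h2 := E0 (-y)
    rw [show (2:ℝ) • (-y) = -((2:ℝ) • y) by module, neg_neg] at h2
    have key : g ((2:ℝ) • y) - (16:ℝ) • g y
        = (6⁻¹:ℝ) • (((3:ℝ) • f ((2:ℝ) • y) - (27:ℝ) • f y - (21:ℝ) • f (-y))
          + ((3:ℝ) • f (-((2:ℝ) • y)) - (27:ℝ) • f (-y) - (21:ℝ) • f y)) := by
      simp only [hg_def]; module
    rw [key, norm_smul]
    have hb : ‖((3:ℝ) • f ((2:ℝ) • y) - (27:ℝ) • f y - (21:ℝ) • f (-y))
        + ((3:ℝ) • f (-((2:ℝ) • y)) - (27:ℝ) • f (-y) - (21:ℝ) • f y)‖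
        ≤ ψ 0 y + ψ 0 (-y) := (norm_add_le _ _).trans (add_le_add h1 h2)
    rw [Real.norm_eq_abs, abs_of_pos (by norm_num : (0:ℝ) < 6⁻¹)]
    nlinarith [norm_nonneg (((3:ℝ) • f ((2:ℝ) • y) - (27:ℝ) • f y - (21:ℝ) • f (-y))
        + ((3:ℝ) • f (-((2:ℝ) • y)) - (27:ℝ) • f (-y) - (21:ℝ) • f y))]
  -- odd part estimate
  have heh : ∀ y : X, ‖h ((2:ℝ) • y) - (2:ℝ) • h y‖ ≤ (ψ 0 y + ψ 0 (-y)) / 6 := by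
    intro y
    have h1 := E0 y
    have h2 := E0 (-y)
    rw [show (2:ℝ) • (-y) = -((2:ℝ) • y) by module, neg_neg] at h2
    have key : h ((2:ℝ) • y) - (2:ℝ) • h y
        = (6⁻¹:ℝ) • (((3:ℝ) • f ((2:ℝ) • y) - (27:ℝ) • f y - (21:ℝ) • f (-y))
          - ((3:ℝ) • f (-((2:ℝ) • y)) - (27:ℝ) • f (-y) - (21:ℝ) • f y)) := by
      simp only [hh_def]; module
    rw [key, norm_smul]
    have hb : ‖((3:ℝ) • f ((2:ℝ) • y) - (27:ℝ) • f y - (21:ℝ) • f (-y))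
        - ((3:ℝ) • f (-((2:ℝ) • y)) - (27:ℝ) • f (-y) - (21:ℝ) • f y)‖
        ≤ ψ 0 y + ψ 0 (-y) := (norm_sub_le _ _).trans (add_le_add h1 h2)
    rw [Real.norm_eq_abs, abs_of_pos (by norm_num : (0:ℝ) < 6⁻¹)]
    nlinarith [norm_nonneg (((3:ℝ) • f ((2:ℝ) • y) - (27:ℝ) • f y - (21:ℝ) • f (-y))
        - ((3:ℝ) • f (-((2:ℝ) • y)) - (27:ℝ) • f (-y) - (21:ℝ) • f y))]
  -- approximating sequences
  set QQ : ℕ → X → Y := fun n x => (16:ℝ) ^ n • g ((2:ℝ) ^ (-(n:ℤ)) • x) with hQQ_def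
  set AA : ℕ → X → Y := fun n x => (2:ℝ) ^ n • h ((2:ℝ) ^ (-(n:ℤ)) • x) with hAA_def
  have hQQ0 : ∀ x, QQ 0 x = g x := by intro x; simp [hQQ_def]
  have hAA0 : ∀ x, AA 0 x = h x := by intro x; simp [hAA_def]
  -- step estimates
  have hQstep : ∀ (x : X) (n : ℕ), ‖QQ (n+1) x - QQ n x‖ ≤ (16:ℝ)^n * (s n x / 6) := by
    intro x n
    have e : QQ (n+1) x - QQ n x
        = (-(16:ℝ)^n) • (g ((2:ℝ) • ((2:ℝ) ^ (-(n:ℤ)-1) • x)) - (16:ℝ) • g ((2:ℝ) ^ (-(n:ℤ)-1) • x)) := by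
      simp only [hQQ_def]
      rw [cast_succ_exp n, z_succ n x, pow_succ]
      module
    rw [e, norm_smul, norm_neg, Real.norm_eq_abs, abs_of_pos (by positivity : (0:ℝ) < (16:ℝ)^n)]
    have := heg ((2:ℝ) ^ (-(n:ℤ)-1) • x)
    have h16 : (0:ℝ) ≤ (16:ℝ)^n := by positivity
    calc (16:ℝ)^n * ‖g ((2:ℝ) • ((2:ℝ) ^ (-(n:ℤ)-1) • x)) - (16:ℝ) • g ((2:ℝ) ^ (-(n:ℤ)-1) • x)‖
        ≤ (16:ℝ)^n * ((ψ 0 ((2:ℝ) ^ (-(n:ℤ)-1) • x) + ψ 0 (-((2:ℝ) ^ (-(n:ℤ)-1) • x))) / 6) :=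
          mul_le_mul_of_nonneg_left this h16
      _ = (16:ℝ)^n * (s n x / 6) := by rw [hs_def]
  have hAstep : ∀ (x : X) (n : ℕ), ‖AA (n+1) x - AA n x‖ ≤ (2:ℝ)^n * (s n x / 6) := by
    intro x n
    have e : AA (n+1) x - AA n x
        = (-(2:ℝ)^n) • (h ((2:ℝ) • ((2:ℝ) ^ (-(n:ℤ)-1) • x)) - (2:ℝ) • h ((2:ℝ) ^ (-(n:ℤ)-1) • x)) := by
      simp only [hAA_def]
      rw [cast_succ_exp n, z_succ n x, pow_succ]
      module
    rw [e, norm_smul, norm_neg, Real.norm_eq_abs, abs_of_pos (by positivity : (0:ℝ) < (2:ℝ)^n)]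
    have := heh ((2:ℝ) ^ (-(n:ℤ)-1) • x)
    have h2n : (0:ℝ) ≤ (2:ℝ)^n := by positivity
    calc (2:ℝ)^n * ‖h ((2:ℝ) • ((2:ℝ) ^ (-(n:ℤ)-1) • x)) - (2:ℝ) • h ((2:ℝ) ^ (-(n:ℤ)-1) • x)‖
        ≤ (2:ℝ)^n * ((ψ 0 ((2:ℝ) ^ (-(n:ℤ)-1) • x) + ψ 0 (-((2:ℝ) ^ (-(n:ℤ)-1) • x))) / 6) :=
          mul_le_mul_of_nonneg_left this h2n
      _ = (2:ℝ)^n * (s n x / 6) := by rw [hs_def]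
  -- summability of majorants
  have hsum' : ∀ x : X, Summable fun i : ℕ => (16:ℝ)^i * ψ 0 (-((2:ℝ) ^ (-(i:ℤ)-1) • x)) := by
    intro x
    have := hsum (-x)
    simpa [smul_neg] using this
  have hsQmaj : ∀ x : X, Summable fun n : ℕ => (16:ℝ)^n * (s n x / 6) := by
    intro x
    apply Summable.congr (((hsum x).add (hsum' x)).div_const 6)
    intro n
    simp only [hs_def]
    ring
  have hsAmaj : ∀ x : X, Summable fun n : ℕ => (2:ℝ)^n * (s n x / 6) := by
    intro x
    apply Summable.of_nonneg_of_le
      (fun n => mul_nonneg (by positivity) (div_nonneg (hs_nonneg n x) (by norm_num))) _ (hsQmaj x)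
    intro n
    have : (2:ℝ)^n ≤ (16:ℝ)^n := pow_le_pow_left₀ (by norm_num) (by norm_num) n
    have hsn : 0 ≤ s n x / 6 := div_nonneg (hs_nonneg n x) (by norm_num)
    exact mul_le_mul_of_nonneg_right this hsn
  -- existence of limits
  have hQex : ∀ x : X, ∃ L : Y, Tendsto (fun n => QQ n x) atTop (𝓝 L) := by
    intro x
    apply cauchySeq_tendsto_of_complete
    apply cauchySeq_of_summable_dist
    apply Summable.of_nonneg_of_le (fun n => dist_nonneg) _ (hsQmaj x)
    intro n
    rw [dist_eq_norm, norm_sub_rev]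
    exact hQstep x n
  have hAex : ∀ x : X, ∃ L : Y, Tendsto (fun n => AA n x) atTop (𝓝 L) := by
    intro x
    apply cauchySeq_tendsto_of_complete
    apply cauchySeq_of_summable_dist
    apply Summable.of_nonneg_of_le (fun n => dist_nonneg) _ (hsAmaj x)
    intro n
    rw [dist_eq_norm, norm_sub_rev]
    exact hAstep x n
  choose Q hQlim using hQex
  choose A hAlim using hAex
  -- distance bounds
  have hQbound : ∀ x : X, ‖g x - Q x‖ ≤ ∑' n, (16:ℝ)^n * (s n x / 6) := by
    intro x
    have := dist_le_tsum_of_dist_le_of_tendsto₀ (fun n => (16:ℝ)^n * (s n x / 6))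
      (fun n => by rw [dist_eq_norm, norm_sub_rev]; exact hQstep x n) (hsQmaj x) (hQlim x)
    rwa [hQQ0 x, dist_eq_norm] at this
  have hAbound : ∀ x : X, ‖h x - A x‖ ≤ ∑' n, (2:ℝ)^n * (s n x / 6) := by
    intro x
    have := dist_le_tsum_of_dist_le_of_tendsto₀ (fun n => (2:ℝ)^n * (s n x / 6))
      (fun n => by rw [dist_eq_norm, norm_sub_rev]; exact hAstep x n) (hsAmaj x) (hAlim x)
    rwa [hAA0 x, dist_eq_norm] at this
  -- the error functional (literal form matching the goal)
  set Phi : X → ℝ := fun w => ∑' i : ℕ,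
      ((16 : ℝ) ^ i / 3 + 2 ^ i) *
        ((ψ 0 ((2 : ℝ) ^ (-(i : ℤ) - 1) • w) + ψ 0 (-((2 : ℝ) ^ (-(i : ℤ) - 1) • w))) / 2)
    with hPhi_def
  have hsPhi : ∀ x : X, Summable fun i : ℕ => ((16:ℝ)^i/3 + 2^i) * (s i x / 2) := by
    intro x
    apply Summable.of_nonneg_of_le
      (fun i => mul_nonneg (by positivity) (div_nonneg (hs_nonneg i x) (by norm_num)))
      _ ((hsQmaj x).mul_left 4)
    intro i
    exact arith1 (hs_nonneg i x) (pow_le_pow_left₀ (by norm_num) (by norm_num) i)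
  have hsPhi' : ∀ x : X, Summable fun i : ℕ =>
      ((16 : ℝ) ^ i / 3 + 2 ^ i) *
        ((ψ 0 ((2 : ℝ) ^ (-(i : ℤ) - 1) • x) + ψ 0 (-((2 : ℝ) ^ (-(i : ℤ) - 1) • x))) / 2) := by
    intro x
    have := hsPhi x
    simpa only [hs_def] using this
  have hPhi_nonneg : ∀ w, 0 ≤ Phi w := by
    intro w
    apply tsum_nonneg
    intro i
    apply mul_nonneg (by positivity)
    have := hψ 0 ((2 : ℝ) ^ (-(i : ℤ) - 1) • w)
    have := hψ 0 (-((2 : ℝ) ^ (-(i : ℤ) - 1) • w))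
    linarith
  have hfinal : ∀ x : X, ‖f x - Q x - A x‖ ≤ Phi x := by
    intro x
    have e : f x - Q x - A x = (g x - Q x) + (h x - A x) := by rw [hgh x]; module
    have tPhi : Phi x = ∑' i, ((16:ℝ)^i/3 + 2^i) * (s i x / 2) := by
      simp only [hPhi_def, hs_def]
    rw [e, tPhi]
    calc ‖(g x - Q x) + (h x - A x)‖ ≤ ‖g x - Q x‖ + ‖h x - A x‖ := norm_add_le _ _
      _ ≤ (∑' n, (16:ℝ)^n * (s n x / 6)) + (∑' n, (2:ℝ)^n * (s n x / 6)) :=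
          add_le_add (hQbound x) (hAbound x)
      _ = ∑' n, ((16:ℝ)^n * (s n x / 6) + (2:ℝ)^n * (s n x / 6)) :=
          (Summable.tsum_add (hsQmaj x) (hsAmaj x)).symm
      _ ≤ ∑' i, ((16:ℝ)^i/3 + 2^i) * (s i x / 2) := by
          apply Summable.tsum_le_tsum _ ((hsQmaj x).add (hsAmaj x)) (hsPhi x)
          intro n
          exact arith2 (hs_nonneg n x) (by positivity)
  -- Dmap bounds for even/odd parts
  have hDg : ∀ a b : X, ‖Dmap g a b‖ ≤ (ψ a b + ψ (-a) (-b)) / 2 := by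
    intro a b
    have e1 : (2:ℝ) • (-a) + (-b) = -((2:ℝ) • a + b) := by module
    have e2 : (2:ℝ) • (-a) - (-b) = -((2:ℝ) • a - b) := by module
    have e3 : (-a) + (-b) = -(a + b) := by module
    have e4 : (-a) - (-b) = -(a - b) := by module
    have e5 : (2:ℝ) • (-b) = -((2:ℝ) • b) := by module
    have e6 : (2:ℝ) • (-a) = -((2:ℝ) • a) := by module
    have key : Dmap g a b = (2⁻¹:ℝ) • (Dmap f a b + Dmap f (-a) (-b)) := by
      simp only [Dmap, hg_def]
      rw [e1, e2, e3, e4, e5, e6]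
      module
    rw [key, norm_smul, Real.norm_eq_abs, abs_of_pos (by norm_num : (0:ℝ) < 2⁻¹)]
    have hb := (norm_add_le _ _).trans (add_le_add (hD a b) (hD (-a) (-b)))
    nlinarith [norm_nonneg (Dmap f a b + Dmap f (-a) (-b))]
  have hDh : ∀ a b : X, ‖Dmap h a b‖ ≤ (ψ a b + ψ (-a) (-b)) / 2 := by
    intro a b
    have e1 : (2:ℝ) • (-a) + (-b) = -((2:ℝ) • a + b) := by module
    have e2 : (2:ℝ) • (-a) - (-b) = -((2:ℝ) • a - b) := by module
    have e3 : (-a) + (-b) = -(a + b) := by module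
    have e4 : (-a) - (-b) = -(a - b) := by module
    have e5 : (2:ℝ) • (-b) = -((2:ℝ) • b) := by module
    have e6 : (2:ℝ) • (-a) = -((2:ℝ) • a) := by module
    have key : Dmap h a b = (2⁻¹:ℝ) • (Dmap f a b - Dmap f (-a) (-b)) := by
      simp only [Dmap, hh_def]
      rw [e1, e2, e3, e4, e5, e6]
      module
    rw [key, norm_smul, Real.norm_eq_abs, abs_of_pos (by norm_num : (0:ℝ) < 2⁻¹)]
    have hb := (norm_sub_le _ _).trans (add_le_add (hD a b) (hD (-a) (-b)))
    nlinarith [norm_nonneg (Dmap f a b - Dmap f (-a) (-b))]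
  -- transport of Dmap along the scaling
  have hQtrans : ∀ (n : ℕ) (x y : X), Dmap (QQ n) x y
      = (16:ℝ)^n • Dmap g ((2:ℝ)^(-(n:ℤ)) • x) ((2:ℝ)^(-(n:ℤ)) • y) := by
    intro n x y
    simp only [Dmap, hQQ_def]
    rw [show (2:ℝ)^(-(n:ℤ)) • ((2:ℝ) • x + y)
          = (2:ℝ) • ((2:ℝ)^(-(n:ℤ)) • x) + (2:ℝ)^(-(n:ℤ)) • y by module,
        show (2:ℝ)^(-(n:ℤ)) • ((2:ℝ) • x - y)
          = (2:ℝ) • ((2:ℝ)^(-(n:ℤ)) • x) - (2:ℝ)^(-(n:ℤ)) • y by module,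
        show (2:ℝ)^(-(n:ℤ)) • (x + y) = (2:ℝ)^(-(n:ℤ)) • x + (2:ℝ)^(-(n:ℤ)) • y by module,
        show (2:ℝ)^(-(n:ℤ)) • (x - y) = (2:ℝ)^(-(n:ℤ)) • x - (2:ℝ)^(-(n:ℤ)) • y by module,
        show (2:ℝ)^(-(n:ℤ)) • ((2:ℝ) • y) = (2:ℝ) • ((2:ℝ)^(-(n:ℤ)) • y) by module,
        show (2:ℝ)^(-(n:ℤ)) • ((2:ℝ) • x) = (2:ℝ) • ((2:ℝ)^(-(n:ℤ)) • x) by module]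
    module
  have hAtrans : ∀ (n : ℕ) (x y : X), Dmap (AA n) x y
      = (2:ℝ)^n • Dmap h ((2:ℝ)^(-(n:ℤ)) • x) ((2:ℝ)^(-(n:ℤ)) • y) := by
    intro n x y
    simp only [Dmap, hAA_def]
    rw [show (2:ℝ)^(-(n:ℤ)) • ((2:ℝ) • x + y)
          = (2:ℝ) • ((2:ℝ)^(-(n:ℤ)) • x) + (2:ℝ)^(-(n:ℤ)) • y by module,
        show (2:ℝ)^(-(n:ℤ)) • ((2:ℝ) • x - y)
          = (2:ℝ) • ((2:ℝ)^(-(n:ℤ)) • x) - (2:ℝ)^(-(n:ℤ)) • y by module,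
        show (2:ℝ)^(-(n:ℤ)) • (x + y) = (2:ℝ)^(-(n:ℤ)) • x + (2:ℝ)^(-(n:ℤ)) • y by module,
        show (2:ℝ)^(-(n:ℤ)) • (x - y) = (2:ℝ)^(-(n:ℤ)) • x - (2:ℝ)^(-(n:ℤ)) • y by module,
        show (2:ℝ)^(-(n:ℤ)) • ((2:ℝ) • y) = (2:ℝ) • ((2:ℝ)^(-(n:ℤ)) • y) by module,
        show (2:ℝ)^(-(n:ℤ)) • ((2:ℝ) • x) = (2:ℝ) • ((2:ℝ)^(-(n:ℤ)) • x) by module]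
    module
  -- Dmap Q = 0 and Dmap A = 0
  have hDQ : ∀ x y : X, Dmap Q x y = 0 := by
    intro x y
    have T1 : Tendsto (fun n => Dmap (QQ n) x y) atTop (𝓝 (Dmap Q x y)) := by
      simp only [Dmap]
      exact (((((hQlim _).add (hQlim _)).const_smul (7:ℝ)).sub
        (((hQlim _).add (hQlim _)).const_smul (28:ℝ))).add
        (((hQlim _).sub ((hQlim _).const_smul (2:ℝ))).const_smul (3:ℝ))).sub
        (((hQlim _).sub ((hQlim _).const_smul (4:ℝ))).const_smul (14:ℝ))
    have hbnd : ∀ n : ℕ, ‖Dmap (QQ n) x y‖ ≤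
        ((16:ℝ)^n * ψ ((2:ℝ)^(-(n:ℤ)) • x) ((2:ℝ)^(-(n:ℤ)) • y)
          + (16:ℝ)^n * ψ ((2:ℝ)^(-(n:ℤ)) • (-x)) ((2:ℝ)^(-(n:ℤ)) • (-y))) / 2 := by
      intro n
      rw [hQtrans n x y, norm_smul, Real.norm_eq_abs,
        abs_of_pos (by positivity : (0:ℝ) < (16:ℝ)^n)]
      have hbd := hDg ((2:ℝ)^(-(n:ℤ)) • x) ((2:ℝ)^(-(n:ℤ)) • y)
      rw [show -((2:ℝ)^(-(n:ℤ)) • x) = (2:ℝ)^(-(n:ℤ)) • (-x) by module,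
          show -((2:ℝ)^(-(n:ℤ)) • y) = (2:ℝ)^(-(n:ℤ)) • (-y) by module] at hbd
      have h16 : (0:ℝ) ≤ (16:ℝ)^n := by positivity
      nlinarith [mul_le_mul_of_nonneg_left hbd h16]
    have hten := ((hlim x y).add (hlim (-x) (-y))).div_const 2
    rw [show ((0:ℝ) + 0)/2 = 0 by norm_num] at hten
    exact tendsto_nhds_unique T1 (squeeze_zero_norm hbnd hten)
  have hDA : ∀ x y : X, Dmap A x y = 0 := by
    intro x y
    have T1 : Tendsto (fun n => Dmap (AA n) x y) atTop (𝓝 (Dmap A x y)) := by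
      simp only [Dmap]
      exact (((((hAlim _).add (hAlim _)).const_smul (7:ℝ)).sub
        (((hAlim _).add (hAlim _)).const_smul (28:ℝ))).add
        (((hAlim _).sub ((hAlim _).const_smul (2:ℝ))).const_smul (3:ℝ))).sub
        (((hAlim _).sub ((hAlim _).const_smul (4:ℝ))).const_smul (14:ℝ))
    have hbnd : ∀ n : ℕ, ‖Dmap (AA n) x y‖ ≤
        ((16:ℝ)^n * ψ ((2:ℝ)^(-(n:ℤ)) • x) ((2:ℝ)^(-(n:ℤ)) • y)
          + (16:ℝ)^n * ψ ((2:ℝ)^(-(n:ℤ)) • (-x)) ((2:ℝ)^(-(n:ℤ)) • (-y))) / 2 := by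
      intro n
      rw [hAtrans n x y, norm_smul, Real.norm_eq_abs,
        abs_of_pos (by positivity : (0:ℝ) < (2:ℝ)^n)]
      have hbd := hDh ((2:ℝ)^(-(n:ℤ)) • x) ((2:ℝ)^(-(n:ℤ)) • y)
      rw [show -((2:ℝ)^(-(n:ℤ)) • x) = (2:ℝ)^(-(n:ℤ)) • (-x) by module,
          show -((2:ℝ)^(-(n:ℤ)) • y) = (2:ℝ)^(-(n:ℤ)) • (-y) by module] at hbd
      have h16 : (2:ℝ)^n ≤ (16:ℝ)^n := pow_le_pow_left₀ (by norm_num) (by norm_num) n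
      have h2 : (0:ℝ) ≤ (2:ℝ)^n := by positivity
      have hnn := norm_nonneg (Dmap h ((2:ℝ)^(-(n:ℤ)) • x) ((2:ℝ)^(-(n:ℤ)) • y))
      nlinarith [mul_le_mul_of_nonneg_left hbd h2,
        mul_le_mul_of_nonneg_right h16 hnn]
    have hten := ((hlim x y).add (hlim (-x) (-y))).div_const 2
    rw [show ((0:ℝ) + 0)/2 = 0 by norm_num] at hten
    exact tendsto_nhds_unique T1 (squeeze_zero_norm hbnd hten)
  -- parity of the limits
  have hQeven : ∀ x : X, Q (-x) = Q x := by
    intro x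
    have he : ∀ n, QQ n (-x) = QQ n x := by
      intro n
      simp only [hQQ_def, smul_neg, hgeven]
    have t1 := hQlim (-x)
    rw [show (fun n => QQ n (-x)) = fun n => QQ n x from funext he] at t1
    exact tendsto_nhds_unique t1 (hQlim x)
  have hAodd : ∀ x : X, A (-x) = -A x := by
    intro x
    have he : ∀ n, AA n (-x) = -AA n x := by
      intro n
      simp only [hAA_def, smul_neg, hhodd]
    have t1 := hAlim (-x)
    rw [show (fun n => AA n (-x)) = fun n => -AA n x from funext he] at t1
    exact tendsto_nhds_unique t1 (hAlim x).neg
  have hQquartic : IsQuartic Q := quartic_of_D0 Q hQeven hDQ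
  have hAadd : ∀ x y : X, A (x + y) = A x + A y := additive_of_D0 A hAodd hDA
  -- package existence
  refine ⟨Q, A, hQquartic, hAadd, fun x => hfinal x, ?_⟩
  -- uniqueness
  intro Q' A' hq' ha' hb'
  obtain ⟨hQ'0, hQ'db⟩ := quartic_double Q' hq'
  obtain ⟨hQ0', hQdb⟩ := quartic_double Q hQquartic
  have hA'db : ∀ w : X, A' ((2:ℝ) • w) = (2:ℝ) • A' w := by
    intro w
    rw [two_smul, ha' w w, two_smul]
  have hAdb : ∀ w : X, A ((2:ℝ) • w) = (2:ℝ) • A w := by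
    intro w
    rw [two_smul, hAadd w w, two_smul]
  have hQ's := scale_lemma Q' 16 hQ'db
  have hQs := scale_lemma Q 16 hQdb
  have hA's := scale_lemma A' 2 hA'db
  have hAs := scale_lemma A 2 hAdb
  have hb'' : ∀ w : X, ‖f w - Q' w - A' w‖ ≤ Phi w := fun w => hb' w
  have main : ∀ x : X, Q' x = Q x ∧ A' x = A x := by
    intro x
    -- the key inequality
    set ee : ℕ → ℝ := fun n =>
      (16:ℝ)^n * (Phi ((2:ℝ)^(-(n:ℤ)) • x) + Phi ((2:ℝ)^(-(n:ℤ)) • x)) with hee_def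
    have hkey : ∀ n : ℕ, ‖(Q' x - Q x) + (8:ℝ)^n • (A' x - A x)‖ ≤ ee n := by
      intro n
      have keyeq : (Q' x - Q x) + (8:ℝ)^n • (A' x - A x)
          = (16:ℝ)^n • ((Q' ((2:ℝ)^(-(n:ℤ)) • x) - Q ((2:ℝ)^(-(n:ℤ)) • x))
            + (A' ((2:ℝ)^(-(n:ℤ)) • x) - A ((2:ℝ)^(-(n:ℤ)) • x))) := by
        rw [hQ's n x, hQs n x, hA's n x, hAs n x,
          show (16:ℝ)^n = 8^n * 2^n by rw [← mul_pow]; norm_num]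
        module
      rw [keyeq, norm_smul, Real.norm_eq_abs,
        abs_of_pos (by positivity : (0:ℝ) < (16:ℝ)^n)]
      have e2 : (Q' ((2:ℝ)^(-(n:ℤ)) • x) - Q ((2:ℝ)^(-(n:ℤ)) • x))
            + (A' ((2:ℝ)^(-(n:ℤ)) • x) - A ((2:ℝ)^(-(n:ℤ)) • x))
          = (f ((2:ℝ)^(-(n:ℤ)) • x) - Q ((2:ℝ)^(-(n:ℤ)) • x) - A ((2:ℝ)^(-(n:ℤ)) • x))
            - (f ((2:ℝ)^(-(n:ℤ)) • x) - Q' ((2:ℝ)^(-(n:ℤ)) • x) - A' ((2:ℝ)^(-(n:ℤ)) • x)) := by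
        module
      have hb3 : ‖(Q' ((2:ℝ)^(-(n:ℤ)) • x) - Q ((2:ℝ)^(-(n:ℤ)) • x))
            + (A' ((2:ℝ)^(-(n:ℤ)) • x) - A ((2:ℝ)^(-(n:ℤ)) • x))‖
          ≤ Phi ((2:ℝ)^(-(n:ℤ)) • x) + Phi ((2:ℝ)^(-(n:ℤ)) • x) := by
        rw [e2]
        exact (norm_sub_le _ _).trans (add_le_add (hfinal _) (hb'' _))
      rw [hee_def]
      exact mul_le_mul_of_nonneg_left hb3 (by positivity)
    -- the majorant tends to zero
    have heelim : Tendsto ee atTop (𝓝 0) := by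
      set w : ℕ → ℝ := fun j => (16:ℝ)^j * (s j x / 6) with hw_def
      have hele : ∀ n : ℕ, ee n ≤ 8 * ∑' i : ℕ, w (i + n) := by
        intro n
        have hΦ : Phi ((2:ℝ)^(-(n:ℤ)) • x)
            = ∑' i : ℕ, ((16:ℝ)^i/3 + 2^i) * (s (i + n) x / 2) := by
          rw [hPhi_def]
          refine tsum_congr fun i => ?_
          rw [zz_shift i n x]
        have he1 : ee n = ∑' i : ℕ, ((16:ℝ)^n * 2) * (((16:ℝ)^i/3 + 2^i) * (s (i + n) x / 2)) := by
          simp only [hee_def]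
          rw [hΦ, tsum_mul_left]
          ring
        have hsw : Summable fun i : ℕ => w (i + n) := by
          simp only [hw_def]
          exact (summable_nat_add_iff n).mpr (hsQmaj x) |>.congr (fun i => rfl)
        have hperm : ∀ i : ℕ, ((16:ℝ)^n * 2) * (((16:ℝ)^i/3 + 2^i) * (s (i + n) x / 2))
            ≤ 8 * w (i + n) := by
          intro i
          simp only [hw_def]
          have h1 : (2:ℝ)^i ≤ 16^i := pow_le_pow_left₀ (by norm_num) (by norm_num) i
          have h2 : 0 ≤ s (i + n) x := hs_nonneg (i + n) x
          have h3 : ((16:ℝ))^(i+n) = 16^i * 16^n := by rw [pow_add]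
          rw [h3]
          exact arith3 (by positivity) h2 h1
        have hsl : Summable fun i : ℕ =>
            ((16:ℝ)^n * 2) * (((16:ℝ)^i/3 + 2^i) * (s (i + n) x / 2)) := by
          apply Summable.of_nonneg_of_le _ hperm (hsw.mul_left 8)
          intro i
          have h2 : 0 ≤ s (i + n) x := hs_nonneg (i + n) x
          positivity
        calc ee n = ∑' i : ℕ, ((16:ℝ)^n * 2) * (((16:ℝ)^i/3 + 2^i) * (s (i + n) x / 2)) := he1
          _ ≤ ∑' i : ℕ, 8 * w (i + n) := Summable.tsum_le_tsum hperm hsl (hsw.mul_left 8)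
          _ = 8 * ∑' i : ℕ, w (i + n) := tsum_mul_left
      have hnn : ∀ n : ℕ, 0 ≤ ee n := by
        intro n
        rw [hee_def]
        have := hPhi_nonneg ((2:ℝ)^(-(n:ℤ)) • x)
        positivity
      have hten : Tendsto (fun n : ℕ => 8 * ∑' i : ℕ, w (i + n)) atTop (𝓝 0) := by
        have := (tendsto_sum_nat_add w).const_mul (8:ℝ)
        simpa using this
      exact squeeze_zero hnn hele hten
    -- first conclude A' x = A x
    have hAx : A' x = A x := by
      have hb8 : ∀ n : ℕ, ‖A' x - A x‖ ≤ ((8:ℝ)^n)⁻¹ * (ee n + ‖Q' x - Q x‖) := by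
        intro n
        have h1 := hkey n
        have h2 : ‖(8:ℝ)^n • (A' x - A x)‖ ≤ ee n + ‖Q' x - Q x‖ := by
          have e : (8:ℝ)^n • (A' x - A x)
              = ((Q' x - Q x) + (8:ℝ)^n • (A' x - A x)) - (Q' x - Q x) := by module
          rw [e]
          exact (norm_sub_le _ _).trans (add_le_add h1 le_rfl)
        rw [norm_smul, Real.norm_eq_abs, abs_of_pos (by positivity : (0:ℝ) < (8:ℝ)^n)] at h2
        have h8 : (0:ℝ) < (8:ℝ)^n := by positivity
        calc ‖A' x - A x‖ = ((8:ℝ)^n)⁻¹ * ((8:ℝ)^n * ‖A' x - A x‖) := by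
              field_simp
          _ ≤ ((8:ℝ)^n)⁻¹ * (ee n + ‖Q' x - Q x‖) :=
              mul_le_mul_of_nonneg_left h2 (by positivity)
      have hlim8 : Tendsto (fun n : ℕ => ((8:ℝ)^n)⁻¹ * (ee n + ‖Q' x - Q x‖)) atTop (𝓝 0) := by
        have h1 : Tendsto (fun n : ℕ => ((8:ℝ)^n)⁻¹) atTop (𝓝 0) := by
          simp only [← inv_pow]
          exact tendsto_pow_atTop_nhds_zero_of_lt_one (by norm_num) (by norm_num)
        have h2 : Tendsto (fun n : ℕ => ee n + ‖Q' x - Q x‖) atTop (𝓝 (0 + ‖Q' x - Q x‖)) :=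
          heelim.add tendsto_const_nhds
        have := h1.mul h2
        simpa using this
      have : ‖A' x - A x‖ ≤ 0 := ge_of_tendsto' hlim8 hb8
      have h0 : A' x - A x = 0 := norm_le_zero_iff.mp this
      exact sub_eq_zero.mp h0
    have hQx : Q' x = Q x := by
      have hb9 : ∀ n : ℕ, ‖Q' x - Q x‖ ≤ ee n := by
        intro n
        have h1 := hkey n
        rw [hAx, sub_self, smul_zero, add_zero] at h1
        exact h1
      have : ‖Q' x - Q x‖ ≤ 0 := ge_of_tendsto' heelim hb9
      exact sub_eq_zero.mp (norm_le_zero_iff.mp this)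
    exact ⟨hQx, hAx⟩
  exact ⟨funext fun x => (main x).1, funext fun x => (main x).2⟩
end
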